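/- arXiv:math/9905025 — 3 statements merged into one kernel-verified Lean document; each statement's English description precedes it below -/
import Mathlib

section
/- Let X be a locally finite simplicial complex, G a group of simplicial automorphisms of X acting with finite stabilizers, and for 0 ≤ l < k let f(τ,σ) be a G-invariant real-valued function on pairs (τ,σ) where τ is an ordered l-simplex contained in an ordered k-simplex σ. If Σ(k,G) denotes a set of representatives of G-orbits on ordered k-simplices, then Σ_{σ ∈ Σ(k,G)} Σ_{τ ⊂ σ} f(τ,σ)/|G_σ| = Σ_{τ ∈ Σ(l,G)} Σ_{σ ⊃ τ} f(τ,σ)/|G_τ|, where |G_σ|, |G_τ| denote the cardinalities of the stabilizers. -/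
/-- An abstract simplicial complex on a vertex type `V`. -/
structure SComplex (V : Type*) where
  faces : Set (Finset V)
  not_empty_mem : ∅ ∉ faces
  down_closed : ∀ s ∈ faces, ∀ t, t ⊆ s → t ≠ ∅ → t ∈ faces

namespace SComplex

variable {V : Type*} (X : SComplex V)

/-- Local finiteness: every vertex lies in only finitely many faces. -/
def LocallyFinite : Prop := ∀ v : V, {s ∈ X.faces | v ∈ s}.Finite

/-- The group of simplicial automorphisms, as a subgroup of `Equiv.Perm V`. -/
def aut : Subgroup (Equiv.Perm V) where
  carrier := {g | ∀ s : Finset V, s ∈ X.faces ↔ s.map g.toEmbedding ∈ X.faces}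
  one_mem' := by
    intro s
    have : (1 : Equiv.Perm V).toEmbedding = Function.Embedding.refl V := by
      ext v; rfl
    rw [this, Finset.map_refl]
  mul_mem' := by
    intro a b ha hb s
    rw [hb s, ha (s.map b.toEmbedding), Finset.map_map]
    rfl
  inv_mem' := by
    intro a ha s
    have h := ha (s.map (a⁻¹ : Equiv.Perm V).toEmbedding)
    rw [Finset.map_map] at h
    have : ((a⁻¹ : Equiv.Perm V).toEmbedding.trans a.toEmbedding) =
        Function.Embedding.refl V := by
      ext v; simp
    rw [this, Finset.map_refl] at h
    exact h.symm

/-- The compact-open topology on `Equiv.Perm V` for a discrete vertex set: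
the topology induced by pointwise convergence of a permutation and its inverse. -/
def permTop (V : Type*) : TopologicalSpace (Equiv.Perm V) :=
  letI : TopologicalSpace V := ⊥
  TopologicalSpace.induced
    (fun g : Equiv.Perm V => ((g : V → V), ((g.symm : V → V)))) inferInstance

scoped instance instPermTop (V : Type*) : TopologicalSpace (Equiv.Perm V) := permTop V

/-- `K` is (the vertex set of) a finite subcomplex of `X`. -/
def IsFiniteSubcomplexVerts (K : Finset V) : Prop := ∀ v ∈ K, ({v} : Finset V) ∈ X.faces

/-- The pointwise stabilizer of a finite set of vertices in a subgroup `G ≤ Equiv.Perm V`. -/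
def pointStab (G : Subgroup (Equiv.Perm V)) (K : Finset V) : Set G :=
  {g : G | ∀ v ∈ K, (g : Equiv.Perm V) v = v}

end SComplex

section OrderedSimplices

variable {V : Type*} [DecidableEq V] (X : SComplex V)

/-- Ordered `k`-simplices of `X`: injective `(k+1)`-tuples of vertices spanning a face. -/
def SComplex.osimp (k : ℕ) : Type _ :=
  {s : Fin (k + 1) → V // Function.Injective s ∧ Finset.univ.image s ∈ X.faces}

variable {G : Type*} [Group G]

/-- The action of `g ∈ G` on ordered `k`-simplices, for an action `act` of `G` on `X`
by simplicial automorphisms. -/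
def SComplex.gAct (act : G →* Equiv.Perm V) (hact : ∀ g : G, act g ∈ X.aut)
    {k : ℕ} (g : G) (σ : X.osimp k) : X.osimp k :=
  ⟨fun i => act g (σ.1 i), by
    refine ⟨(act g).injective.comp σ.2.1, ?_⟩
    have h := ((hact g) (Finset.univ.image σ.1)).mp σ.2.2
    rw [Finset.map_eq_image] at h
    rw [Finset.image_image] at h
    convert h using 2
    first | rfl | (funext i; simp)⟩

/-- `τ` is a face of `σ`: the vertices of `τ` are among the vertices of `σ`. -/
def SComplex.OSub {l k : ℕ} (τ : X.osimp l) (σ : X.osimp k) : Prop :=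
  Set.range τ.1 ⊆ Set.range σ.1

/-- `R` is a set of representatives of the `G`-orbits on ordered `k`-simplices. -/
def SComplex.IsOrbitReps (act : G →* Equiv.Perm V) (hact : ∀ g : G, act g ∈ X.aut)
    {k : ℕ} (R : Finset (X.osimp k)) : Prop :=
  ∀ σ : X.osimp k, ∃! σ' : X.osimp k, σ' ∈ R ∧ ∃ g : G, X.gAct act hact g σ' = σ

end OrderedSimplices

/-!
Both sides equal `∑_{σ₀ ∈ Rk} ∑_{τ₀ ∈ Rl} ∑_{g : g • τ₀ ⊂ σ₀} f (g • τ₀) σ₀ / (|G_σ₀| |G_τ₀|)`.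
A point `x` of a `G`-set is written as `g • r`, with `r` the representative of its orbit, for
exactly `|G_r|` elements `g`; so summing over pairs `(r, g)` with weight `1 / |G_r|` counts every
`x` once. Applied to the faces of each `σ₀` this gives the left side. Applied to the cofaces of
each `τ₀` it gives the right side, after the substitution `g ↦ g⁻¹`, which by `G`-invariance of
`f` and of `⊂` turns `f τ₀ (g • σ₀)` with `τ₀ ⊂ g • σ₀` into `f (g • τ₀) σ₀` with `g • τ₀ ⊂ σ₀`.
-/

namespace MulAction

variable {G α : Type*} [Group G] [MulAction G α]

def smulEqEquivStabilizer (h : G) (r : α) : {g : G // g • r = h • r} ≃ stabilizer G r :=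
  (Equiv.mulLeft h⁻¹).subtypeEquiv fun g => by
    rw [mem_stabilizer_iff, Equiv.coe_mulLeft, mul_smul, inv_smul_eq_iff]

lemma natCard_smul_eq_of_mem_orbit {r x : α} (hx : x ∈ orbit G r) :
    Nat.card {g : G // g • r = x} = Nat.card (stabilizer G r) := by
  obtain ⟨h, rfl⟩ := hx
  exact Nat.card_congr (smulEqEquivStabilizer h r)

lemma isEmpty_smul_eq_of_notMem_orbit {r x : α} (hx : x ∉ orbit G r) :
    IsEmpty {g : G // g • r = x} :=
  ⟨fun g => hx ⟨g.1, g.2⟩⟩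

lemma finite_smul_eq (r x : α) [Finite (stabilizer G r)] : Finite {g : G // g • r = x} := by
  by_cases hx : x ∈ orbit G r
  · obtain ⟨h, rfl⟩ := hx
    exact .of_equiv _ (smulEqEquivStabilizer h r).symm
  · have := isEmpty_smul_eq_of_notMem_orbit hx
    infer_instance

lemma sum_natCard_smul_eq_div_natCard_stabilizer_eq_one {R : Finset α}
    (hR : ∀ x : α, ∃! r, r ∈ R ∧ x ∈ orbit G r) (hstab : ∀ r ∈ R, Finite (stabilizer G r))
    (x : α) :
    ∑ r ∈ R, (Nat.card {g : G // g • r = x} : ℝ) / Nat.card (stabilizer G r) = 1 := by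
  obtain ⟨r₀, ⟨hr₀R, hxr₀⟩, huniq⟩ := hR x
  rw [Finset.sum_eq_single_of_mem r₀ hr₀R fun r hrR hr => ?_]
  · have := hstab r₀ hr₀R
    rw [natCard_smul_eq_of_mem_orbit hxr₀, div_self (Nat.cast_ne_zero.mpr Nat.card_pos.ne')]
  · have := isEmpty_smul_eq_of_notMem_orbit fun hxr => hr (huniq r ⟨hrR, hxr⟩)
    simp

lemma tsum_subtype_comp_eq_tsum_natCard_smul {β γ M : Type*} [AddCommMonoid M]
    [TopologicalSpace M] (φ : β → γ) (p : γ → Prop) [Finite {y // p y}]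
    (hφ : ∀ y, Finite {b // φ b = y}) (F : γ → M) :
    ∑' b : {b // p (φ b)}, F (φ b) = ∑' y : {y // p y}, Nat.card {b // φ b = y} • F y := by
  let e : {b // p (φ b)} ≃ Σ y : {y // p y}, {b // φ b = y} :=
    { toFun b := ⟨⟨φ b, b.2⟩, b.1, rfl⟩
      invFun q := ⟨q.2.1, by rw [q.2.2]; exact q.1.2⟩
      left_inv _ := rfl
      right_inv q := Sigma.subtype_ext (Subtype.ext q.2.2) rfl }
  have := Fintype.ofFinite {y // p y}
  have := fun y => Fintype.ofFinite {b // φ b = y}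
  rw [← e.symm.tsum_eq, tsum_fintype, tsum_fintype, Fintype.sum_sigma]
  refine Finset.sum_congr rfl fun y _ => ?_
  rw [Finset.sum_congr rfl fun b _ => congrArg F b.2, Finset.sum_const, Finset.card_univ,
    Nat.card_eq_fintype_card]

theorem tsum_subtype_eq_sum_orbitReps {R : Finset α}
    (hR : ∀ x : α, ∃! r, r ∈ R ∧ x ∈ orbit G r) (hstab : ∀ r ∈ R, Finite (stabilizer G r))
    (p : α → Prop) [Finite {x // p x}] (F : α → ℝ) :
    ∑' x : {x // p x}, F x =
      ∑ r ∈ R, ∑' g : {g : G // p (g • r)}, F (g.1 • r) / Nat.card (stabilizer G r) := by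
  have := Fintype.ofFinite {x // p x}
  calc ∑' x : {x // p x}, F x
      = ∑ x : {x // p x}, ∑ r ∈ R,
          (Nat.card {g : G // g • r = x} : ℝ) / Nat.card (stabilizer G r) * F x := by
        simp_rw [← Finset.sum_mul, sum_natCard_smul_eq_div_natCard_stabilizer_eq_one hR hstab,
          one_mul, tsum_fintype]
    _ = ∑ r ∈ R, ∑' x : {x // p x},
          Nat.card {g : G // g • r = x.1} • (F x / Nat.card (stabilizer G r)) := by
        rw [Finset.sum_comm]
        refine Finset.sum_congr rfl fun r _ => ?_
        rw [tsum_fintype]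
        simp_rw [nsmul_eq_mul, mul_div, div_mul_eq_mul_div]
    _ = _ := Finset.sum_congr rfl fun r hr =>
        have := hstab r hr
        (tsum_subtype_comp_eq_tsum_natCard_smul (· • r) p (fun x => finite_smul_eq r x)
          (fun y => F y / Nat.card (stabilizer G r))).symm

lemma tsum_subtype_smul_right_eq_smul_left {β γ M : Type*} [MulAction G β] [MulAction G γ]
    [AddCommMonoid M] [TopologicalSpace M]
    (P : β → γ → Prop) (hP : ∀ (g : G) a b, P (g • a) (g • b) ↔ P a b)
    (F : β → γ → M) (hF : ∀ (g : G) a b, F (g • a) (g • b) = F a b) (a : β) (b : γ) :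
    ∑' g : {g : G // P a (g • b)}, F a (g.1 • b) =
      ∑' g : {g : G // P (g • a) b}, F (g.1 • a) b := by
  let e : {g : G // P (g • a) b} ≃ {g : G // P a (g • b)} :=
    (Equiv.inv G).subtypeEquiv fun g => by rw [← hP g⁻¹, inv_smul_smul]; rfl
  rw [← e.tsum_eq]
  refine tsum_congr fun g => ?_
  rw [← hF g.1, ← mul_smul]
  simp [e]

end MulAction

namespace SComplex

variable {V : Type*} [DecidableEq V] (X : SComplex V)

lemma finite_osimp_of_forall_mem {m : ℕ} {s : Set V} (hs : s.Finite) (p : X.osimp m → Prop)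
    (hp : ∀ σ, p σ → ∀ i, σ.1 i ∈ s) : Finite {σ // p σ} :=
  have : Finite {f : Fin (m + 1) → V // ∀ i, f i ∈ s} := (Set.Finite.pi' fun _ => hs).to_subtype
  .of_injective (fun σ => (⟨σ.1.1, hp σ.1 σ.2⟩ : {f : Fin (m + 1) → V // ∀ i, f i ∈ s}))
    fun _ _ h => Subtype.ext <| Subtype.ext <| Subtype.mk.inj h

lemma finite_oSub_left {l k : ℕ} (σ : X.osimp k) : Finite {τ : X.osimp l // X.OSub τ σ} :=
  X.finite_osimp_of_forall_mem (Set.finite_range σ.1) _ fun _ hτ i => hτ ⟨i, rfl⟩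

lemma finite_oSub_right (hlf : X.LocallyFinite) {l k : ℕ} (τ : X.osimp l) :
    Finite {σ : X.osimp k // X.OSub τ σ} := by
  refine X.finite_osimp_of_forall_mem ((hlf (τ.1 0)).biUnion fun s _ => s.finite_toSet) _
    fun σ hσ i => ?_
  obtain ⟨j, hj⟩ := hσ ⟨0, rfl⟩
  exact Set.mem_biUnion (x := Finset.univ.image σ.1)
    ⟨σ.2.2, Finset.mem_image.2 ⟨j, Finset.mem_univ _, hj⟩⟩ (by simp)

variable {G : Type*} [Group G] (act : G →* Equiv.Perm V) (hact : ∀ g : G, act g ∈ X.aut)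

abbrev osimpMulAction (m : ℕ) : MulAction G (X.osimp m) where
  smul := X.gAct act hact
  one_smul σ := show X.gAct act hact 1 σ = σ from Subtype.ext <| funext fun i => by simp [gAct]
  mul_smul g h σ := show X.gAct act hact (g * h) σ = X.gAct act hact g (X.gAct act hact h σ) from
    Subtype.ext <| funext fun i => by simp [gAct, Equiv.Perm.mul_apply]

lemma oSub_gAct_iff {l k : ℕ} (g : G) (τ : X.osimp l) (σ : X.osimp k) :
    X.OSub (X.gAct act hact g τ) (X.gAct act hact g σ) ↔ X.OSub τ σ := by
  change Set.range (act g ∘ τ.1) ⊆ Set.range (act g ∘ σ.1) ↔ _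
  rw [Set.range_comp, Set.range_comp, Set.image_subset_image_iff (act g).injective]
  rfl

end SComplex

open SComplex in
theorem double_counting_discrete_general {V : Type*} [DecidableEq V] (X : SComplex V)
    (hlf : X.LocallyFinite) {G : Type*} [Group G]
    (act : G →* Equiv.Perm V) (hact : ∀ g : G, act g ∈ X.aut)
    (hstabfin : ∀ (k : ℕ) (σ : X.osimp k), Finite {g : G // X.gAct act hact g σ = σ})
    (l k : ℕ)
    (f : X.osimp l → X.osimp k → ℝ)
    (hinv : ∀ (g : G) (τ : X.osimp l) (σ : X.osimp k),
      f (X.gAct act hact g τ) (X.gAct act hact g σ) = f τ σ)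
    (Rk : Finset (X.osimp k)) (hRk : X.IsOrbitReps act hact Rk)
    (Rl : Finset (X.osimp l)) (hRl : X.IsOrbitReps act hact Rl) :
    ∑ σ ∈ Rk, ∑' τ : {τ : X.osimp l // X.OSub τ σ},
        f τ.1 σ / (Nat.card {g : G // X.gAct act hact g σ = σ}) =
      ∑ τ ∈ Rl, ∑' σ : {σ : X.osimp k // X.OSub τ σ},
        f τ σ.1 / (Nat.card {g : G // X.gAct act hact g τ = τ}) := by
  let (m : ℕ) := X.osimpMulAction act hact m
  have hstab (m : ℕ) (σ : X.osimp m) : Finite (MulAction.stabilizer G σ) := hstabfin m σ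
  have (σ : X.osimp k) := X.finite_oSub_left (l := l) σ
  have (τ : X.osimp l) := X.finite_oSub_right hlf (k := k) τ
  open MulAction in
  calc _ = ∑ σ ∈ Rk, ∑ τ ∈ Rl, ∑' g : {g : G // X.OSub (g • τ) σ},
          f (g.1 • τ) σ / Nat.card (stabilizer G σ) / Nat.card (stabilizer G τ) :=
        Finset.sum_congr rfl fun σ _ =>
          tsum_subtype_eq_sum_orbitReps hRl (fun τ _ => hstab l τ) (X.OSub · σ)
            fun τ => f τ σ / Nat.card (stabilizer G σ)
    _ = ∑ τ ∈ Rl, ∑ σ ∈ Rk, ∑' g : {g : G // X.OSub τ (g • σ)},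
          f τ (g.1 • σ) / Nat.card (stabilizer G τ) / Nat.card (stabilizer G σ) := by
        rw [Finset.sum_comm]
        refine Finset.sum_congr rfl fun τ _ => Finset.sum_congr rfl fun σ _ => ?_
        rw [tsum_subtype_smul_right_eq_smul_left (G := G) X.OSub (X.oSub_gAct_iff act hact)
          (fun τ' σ' => f τ' σ' / Nat.card (stabilizer G τ) / Nat.card (stabilizer G σ))
          fun g τ' σ' => congrArg (· / _ / _) (hinv g τ' σ')]
        simp_rw [div_right_comm]
    _ = _ := Finset.sum_congr rfl fun τ _ =>
        (tsum_subtype_eq_sum_orbitReps hRk (fun σ _ => hstab k σ) (X.OSub τ)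
          fun σ => f τ σ / Nat.card (stabilizer G τ)).symm

open SComplex in
/-- Discrete double-counting (Lemma 1.3 of Ballmann–Świątkowski): for a group `G`
acting simplicially with finite stabilizers on a locally finite simplicial complex,
a `G`-invariant function `f(τ,σ)` on pairs of an ordered `l`-simplex contained in an
ordered `k`-simplex satisfies the weighted orbit-sum identity. -/
theorem double_counting_discrete {V : Type*} [DecidableEq V] (X : SComplex V)
    (hlf : X.LocallyFinite) {G : Type*} [Group G]
    (act : G →* Equiv.Perm V) (hact : ∀ g : G, act g ∈ X.aut)
    (hstabfin : ∀ (k : ℕ) (σ : X.osimp k), Finite {g : G // X.gAct act hact g σ = σ})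
    (l k : ℕ) (hlk : l < k)
    (f : X.osimp l → X.osimp k → ℝ)
    (hinv : ∀ (g : G) (τ : X.osimp l) (σ : X.osimp k),
      f (X.gAct act hact g τ) (X.gAct act hact g σ) = f τ σ)
    (Rk : Finset (X.osimp k)) (hRk : X.IsOrbitReps act hact Rk)
    (Rl : Finset (X.osimp l)) (hRl : X.IsOrbitReps act hact Rl) :
    ∑ σ ∈ Rk, ∑' τ : {τ : X.osimp l // X.OSub τ σ},
        f τ.1 σ / (Nat.card {g : G // X.gAct act hact g σ = σ}) =
      ∑ τ ∈ Rl, ∑' σ : {σ : X.osimp k // X.OSub τ σ},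
        f τ σ.1 / (Nat.card {g : G // X.gAct act hact g τ = τ}) :=
  double_counting_discrete_general X hlf act hact hstabfin l k f hinv Rk hRk Rl hRl
end

section
/- Let G be a unimodular locally compact group with Haar measure μ acting transitively on a set S with compact open point stabilizers, let x, y ∈ S, and let G_x, G_y be their stabilizers. Then the number of elements in the G_x-orbit of y times μ(G_x ∩ G_y) equals μ(G_x), provided this orbit is finite; consequently |G_x · y| / μ(G_x) = |G_y · x| / μ(G_y) whenever both orbits are finite. -/
/-!
The stabilizer `G_x` is the disjoint union of the cosets of `G_x ∩ G_y` indexed by the orbit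
`G_x · y` (orbit–stabilizer), and these cosets all have measure `μ(G_x ∩ G_y)` by left
invariance; this is the first identity. Dividing it and its mirror image `x ↔ y` by the
orbit sizes, both ratios equal `μ(G_x ∩ G_y)⁻¹`.
-/

open MeasureTheory

instance Subgroup.measurableMul {G : Type*} [Group G] [MeasurableSpace G] [MeasurableMul G]
    (H : Subgroup G) : MeasurableMul H where
  measurable_const_mul c := (measurable_subtype_coe.const_mul (c : G)).subtype_mk
  measurable_mul_const c := (measurable_subtype_coe.mul_const (c : G)).subtype_mk

lemma Subgroup.relIndex_mul_measure {G : Type*} [Group G] [MeasurableSpace G] [MeasurableMul G]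
    (μ : Measure G) [μ.IsMulLeftInvariant] {K H : Subgroup G} [K.IsFiniteRelIndex H]
    (hK : MeasurableSet (K : Set G)) (hH : MeasurableSet (H : Set G)) :
    K.relIndex H * μ (K ⊓ H : Subgroup G) = μ H := by
  have hemb : MeasurableEmbedding H.subtype := MeasurableEmbedding.subtype_coe hH
  have := Measure.IsMulLeftInvariant.comap μ hemb
  have h := (K.subgroupOf H).index_mul_measure (measurable_subtype_coe hK) (μ.comap H.subtype)
  rwa [hemb.comap_apply, hemb.comap_apply, ← Subgroup.coe_map, Subgroup.subgroupOf_map_subtype,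
    Set.image_univ, Subgroup.coe_subtype, Subtype.range_coe] at h

lemma MulAction.natCard_orbit_ne_zero {M α : Type*} [Monoid M] [MulAction M α] {a : α}
    (h : (orbit M a).Finite) : Nat.card (orbit M a) ≠ 0 :=
  have := h.to_subtype
  Nat.card_ne_zero.2 ⟨⟨⟨a, mem_orbit_self a⟩⟩, inferInstance⟩

lemma MulAction.natCard_orbit_mul_measure_inf_stabilizer {G : Type*} [Group G]
    [MeasurableSpace G] [MeasurableMul G] (μ : Measure G) [μ.IsMulLeftInvariant]
    {S : Type*} [MulAction G S] {H : Subgroup G} {y : S} (hfin : (orbit H y).Finite)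
    (hH : MeasurableSet (H : Set G)) (hy : MeasurableSet (stabilizer G y : Set G)) :
    Nat.card (orbit H y) * μ (H ⊓ stabilizer G y : Subgroup G) = μ H := by
  have hcard : Nat.card (orbit H y) = (stabilizer G y).relIndex H := by
    rw [Nat.card_coe_set_eq, ← index_stabilizer]
    rfl
  have : (stabilizer G y).IsFiniteRelIndex H := ⟨hcard ▸ natCard_orbit_ne_zero hfin⟩
  rw [hcard, inf_comm, Subgroup.relIndex_mul_measure μ hy hH]

lemma ENNReal.div_mul_cancel_left {a : ENNReal} (h0 : a ≠ 0) (ht : a ≠ ⊤) (b : ENNReal) :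
    a / (a * b) = b⁻¹ := by
  rw [ENNReal.div_eq_inv_mul, ENNReal.mul_inv (.inl h0) (.inl ht), mul_right_comm,
    ENNReal.inv_mul_cancel h0 ht, one_mul]

theorem stabilizer_orbit_counting_general
    {G : Type*} [Group G] [TopologicalSpace G] [IsTopologicalGroup G]
    [MeasurableSpace G] [BorelSpace G]
    (μ : Measure G) [μ.IsHaarMeasure]
    {S : Type*} [MulAction G S]
    (hstab : ∀ s : S, IsCompact ((MulAction.stabilizer G s : Subgroup G) : Set G) ∧
      IsOpen ((MulAction.stabilizer G s : Subgroup G) : Set G))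
    (x y : S) :
    ((MulAction.orbit (MulAction.stabilizer G x) y).Finite →
      (Nat.card (MulAction.orbit (MulAction.stabilizer G x) y) : ENNReal) *
        μ ((MulAction.stabilizer G x ⊓ MulAction.stabilizer G y : Subgroup G) : Set G) =
        μ ((MulAction.stabilizer G x : Subgroup G) : Set G)) ∧
    ((MulAction.orbit (MulAction.stabilizer G x) y).Finite →
      (MulAction.orbit (MulAction.stabilizer G y) x).Finite →
      (Nat.card (MulAction.orbit (MulAction.stabilizer G x) y) : ENNReal) /
        μ ((MulAction.stabilizer G x : Subgroup G) : Set G) =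
      (Nat.card (MulAction.orbit (MulAction.stabilizer G y) x) : ENNReal) /
        μ ((MulAction.stabilizer G y : Subgroup G) : Set G)) := by
  have hcount (s t : S) (hfin : (MulAction.orbit (MulAction.stabilizer G s) t).Finite) :=
    MulAction.natCard_orbit_mul_measure_inf_stabilizer μ hfin (hstab s).2.measurableSet
      (hstab t).2.measurableSet
  refine ⟨hcount x y, fun hxy hyx => ?_⟩
  rw [← hcount x y hxy, ← hcount y x hyx, inf_comm,
    ENNReal.div_mul_cancel_left (by exact_mod_cast MulAction.natCard_orbit_ne_zero hxy)
      (ENNReal.natCast_ne_top _),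
    ENNReal.div_mul_cancel_left (by exact_mod_cast MulAction.natCard_orbit_ne_zero hyx)
      (ENNReal.natCast_ne_top _)]

/-- For a unimodular locally compact group `G` acting transitively on a set `S` with
compact open point stabilizers: the number of elements in the `G_x`-orbit of `y` times
`μ(G_x ⊓ G_y)` equals `μ(G_x)` when the orbit is finite; consequently
`|G_x · y| / μ(G_x) = |G_y · x| / μ(G_y)` whenever both orbits are finite. -/
theorem stabilizer_orbit_counting
    {G : Type*} [Group G] [TopologicalSpace G] [IsTopologicalGroup G] [T2Space G]
    [LocallyCompactSpace G] [MeasurableSpace G] [BorelSpace G]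
    (μ : Measure G) [μ.IsHaarMeasure] [μ.IsMulRightInvariant]
    {S : Type*} [MulAction G S] [MulAction.IsPretransitive G S]
    (hstab : ∀ s : S, IsCompact ((MulAction.stabilizer G s : Subgroup G) : Set G) ∧
      IsOpen ((MulAction.stabilizer G s : Subgroup G) : Set G))
    (x y : S) :
    ((MulAction.orbit (MulAction.stabilizer G x) y).Finite →
      (Nat.card (MulAction.orbit (MulAction.stabilizer G x) y) : ENNReal) *
        μ ((MulAction.stabilizer G x ⊓ MulAction.stabilizer G y : Subgroup G) : Set G) =
        μ ((MulAction.stabilizer G x : Subgroup G) : Set G)) ∧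
    ((MulAction.orbit (MulAction.stabilizer G x) y).Finite →
      (MulAction.orbit (MulAction.stabilizer G y) x).Finite →
      (Nat.card (MulAction.orbit (MulAction.stabilizer G x) y) : ENNReal) /
        μ ((MulAction.stabilizer G x : Subgroup G) : Set G) =
      (Nat.card (MulAction.orbit (MulAction.stabilizer G y) x) : ENNReal) /
        μ ((MulAction.stabilizer G y : Subgroup G) : Set G)) :=
  stabilizer_orbit_counting_general μ hstab x y
end

section
/- Let X be a connected locally finite simplicial complex of dimension n such that the link of every simplex of codimension ≥ 2 is connected, and suppose that for every (n-1)-simplex σ the stabilizer of σ in Aut(X) acts transitively on the link of σ. Then Aut(X) acts transitively on the set of n-simplices of X. -/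
namespace SComplex

variable {V : Type*} [DecidableEq V] (X : SComplex V)

/-- `v` is a vertex of `X`. -/
def IsVertex (v : V) : Prop := ({v} : Finset V) ∈ X.faces

/-- Two vertices are adjacent when they span an edge. -/
def Adj (u v : V) : Prop := u ≠ v ∧ ({u, v} : Finset V) ∈ X.faces

/-- `X` is connected: any two vertices are joined by a chain of edges. -/
def IsConn : Prop :=
  ∀ u v : V, X.IsVertex u → X.IsVertex v → Relation.ReflTransGen X.Adj u v

/-- The vertex set of the link of a simplex `s`. -/
def linkVerts (s : Finset V) : Set V := {v | v ∉ s ∧ insert v s ∈ X.faces}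

/-- The link of `s` is connected: any two of its vertices are joined by a chain of
edges of the link. -/
def LinkConn (s : Finset V) : Prop :=
  ∀ u w, u ∈ X.linkVerts s → w ∈ X.linkVerts s →
    Relation.ReflTransGen
      (fun a b => a ∈ X.linkVerts s ∧ b ∈ X.linkVerts s ∧ a ≠ b ∧
        insert a (insert b s) ∈ X.faces) u w

/-- `X` is pure of dimension `n`: all faces have at most `n+1` vertices and every face
is contained in a face with exactly `n+1` vertices. -/
def IsPureDim (n : ℕ) : Prop :=
  (∀ s ∈ X.faces, s.card ≤ n + 1) ∧
  (∀ s ∈ X.faces, ∃ t ∈ X.faces, s ⊆ t ∧ t.card = n + 1)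

end SComplex


namespace SComplexAux

open SComplex

variable {V : Type*} [DecidableEq V]

/-- Two simplices are related if some automorphism maps one to the other. -/
def Rel (X : SComplex V) (s t : Finset V) : Prop :=
  ∃ g ∈ X.aut, s.map (Equiv.toEmbedding g) = t

lemma Rel.rfl (X : SComplex V) (s : Finset V) : Rel X s s :=
  ⟨1, one_mem _, by
    have : (1 : Equiv.Perm V).toEmbedding = Function.Embedding.refl V := by ext v; rfl
    rw [this, Finset.map_refl]⟩

lemma Rel.trans {X : SComplex V} {s t u : Finset V}
    (h1 : Rel X s t) (h2 : Rel X t u) : Rel X s u := by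
  obtain ⟨g, hg, rfl⟩ := h1
  obtain ⟨h, hh, rfl⟩ := h2
  refine ⟨h * g, mul_mem hh hg, ?_⟩
  rw [Finset.map_map]
  rfl

/-- Adjacent chambers (sharing a codimension-1 face) are related. -/
lemma rel_adj (X : SComplex V) {n : ℕ} (hn : 1 ≤ n)
    (htrans : ∀ σ ∈ X.faces, σ.card = n →
      ∀ u ∈ X.linkVerts σ, ∀ w ∈ X.linkVerts σ,
        ∃ g ∈ X.aut, (∀ v ∈ σ, g v = v) ∧ g u = w)
    {σ s t : Finset V} (hσcard : σ.card = n)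
    (hs : s ∈ X.faces) (hscard : s.card = n + 1) (hσs : σ ⊆ s)
    (ht : t ∈ X.faces) (htcard : t.card = n + 1) (hσt : σ ⊆ t) :
    Rel X s t := by
  have hσne : σ ≠ ∅ := by
    intro h
    rw [h, Finset.card_empty] at hσcard
    omega
  have hσf : σ ∈ X.faces := X.down_closed s hs σ hσs hσne
  obtain ⟨u, hu⟩ : ∃ u, s \ σ = {u} := by
    apply Finset.card_eq_one.mp
    rw [Finset.card_sdiff_of_subset hσs, hscard, hσcard]
    omega
  obtain ⟨w, hw⟩ : ∃ w, t \ σ = {w} := by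
    apply Finset.card_eq_one.mp
    rw [Finset.card_sdiff_of_subset hσt, htcard, hσcard]
    omega
  have hus : u ∈ s \ σ := hu ▸ Finset.mem_singleton_self u
  have hwt : w ∈ t \ σ := hw ▸ Finset.mem_singleton_self w
  have huσ : u ∉ σ := (Finset.mem_sdiff.mp hus).2
  have hwσ : w ∉ σ := (Finset.mem_sdiff.mp hwt).2
  have hsu : s = insert u σ := by
    have h1 := Finset.sdiff_union_of_subset hσs
    rw [hu] at h1
    rw [Finset.insert_eq]
    exact h1.symm
  have htw : t = insert w σ := by
    have h1 := Finset.sdiff_union_of_subset hσt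
    rw [hw] at h1
    rw [Finset.insert_eq]
    exact h1.symm
  have hulink : u ∈ X.linkVerts σ := ⟨huσ, by rw [← hsu]; exact hs⟩
  have hwlink : w ∈ X.linkVerts σ := ⟨hwσ, by rw [← htw]; exact ht⟩
  obtain ⟨g, hg, hfix, hgu⟩ := htrans σ hσf hσcard u hulink w hwlink
  have hσmap : σ.map (Equiv.toEmbedding g) = σ := by
    apply Finset.eq_of_subset_of_card_le
    · intro x hx
      obtain ⟨y, hy, rfl⟩ := Finset.mem_map.mp hx
      simpa [Equiv.coe_toEmbedding, hfix y hy] using hy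
    · rw [Finset.card_map]
  refine ⟨g, hg, ?_⟩
  rw [hsu, htw, Finset.map_insert, hσmap]
  congr 1

/-- Any two chambers containing a common face are related (gallery connectivity over a face). -/
lemma rel_of_common_face (X : SComplex V) {n : ℕ} (hn : 1 ≤ n)
    (hdim : X.IsPureDim n)
    (hlinks : ∀ s ∈ X.faces, s.card ≤ n - 1 → X.LinkConn s)
    (htrans : ∀ σ ∈ X.faces, σ.card = n →
      ∀ u ∈ X.linkVerts σ, ∀ w ∈ X.linkVerts σ,
        ∃ g ∈ X.aut, (∀ v ∈ σ, g v = v) ∧ g u = w) :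
    ∀ k : ℕ, ∀ τ ∈ X.faces, n + 1 - τ.card ≤ k →
      ∀ s ∈ X.faces, s.card = n + 1 → τ ⊆ s →
      ∀ t ∈ X.faces, t.card = n + 1 → τ ⊆ t → Rel X s t := by
  intro k
  induction k with
  | zero =>
    intro τ hτ hk s hs hscard hτs t ht htcard hτt
    have hτcard : τ.card = n + 1 := by
      have := Finset.card_le_card hτs
      omega
    have h1 : τ = s := Finset.eq_of_subset_of_card_le hτs (by omega)
    have h2 : τ = t := Finset.eq_of_subset_of_card_le hτt (by omega)
    rw [← h1, ← h2]
    exact Rel.rfl X τ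
  | succ k ih =>
    intro τ hτ hk s hs hscard hτs t ht htcard hτt
    have hτle : τ.card ≤ n + 1 := hdim.1 τ hτ
    rcases Nat.lt_or_ge τ.card n with hlt | hge
    · -- codimension ≥ 2 case
      have hτsmall : τ.card ≤ n - 1 := by omega
      have hlink := hlinks τ hτ hτsmall
      -- choose u ∈ s \ τ, w ∈ t \ τ
      obtain ⟨u, hus⟩ : (s \ τ).Nonempty := by
        rw [← Finset.card_pos, Finset.card_sdiff_of_subset hτs]
        omega
      obtain ⟨w, hwt⟩ : (t \ τ).Nonempty := by
        rw [← Finset.card_pos, Finset.card_sdiff_of_subset hτt]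
        omega
      have huτ : u ∉ τ := (Finset.mem_sdiff.mp hus).2
      have hwτ : w ∉ τ := (Finset.mem_sdiff.mp hwt).2
      have hins_u : insert u τ ∈ X.faces :=
        X.down_closed s hs _ (Finset.insert_subset (Finset.mem_sdiff.mp hus).1 hτs)
          (Finset.insert_ne_empty _ _)
      have hins_w : insert w τ ∈ X.faces :=
        X.down_closed t ht _ (Finset.insert_subset (Finset.mem_sdiff.mp hwt).1 hτt)
          (Finset.insert_ne_empty _ _)
      have hulink : u ∈ X.linkVerts τ := ⟨huτ, hins_u⟩
      have hwlink : w ∈ X.linkVerts τ := ⟨hwτ, hins_w⟩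
      have hchain := hlink u w hulink hwlink
      -- measure for inserted faces
      have hmeas : ∀ a : V, a ∉ τ → n + 1 - (insert a τ).card ≤ k := by
        intro a ha
        rw [Finset.card_insert_of_notMem ha]
        omega
      -- induct along the chain in the link
      have key : ∀ s' ∈ X.faces, s'.card = n + 1 → insert u τ ⊆ s' → Rel X s' t := by
        clear hus huτ hins_u hulink hs hscard hτs
        induction hchain using Relation.ReflTransGen.head_induction_on with
        | refl =>
          intro s' hs' hs'card hsub
          exact ih (insert w τ) hins_w (hmeas w hwτ) s' hs' hs'card hsub t ht htcard
            (Finset.insert_subset (Finset.mem_sdiff.mp hwt).1 hτt)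
        | head hab hbw ihP =>
          rename_i a b
          obtain ⟨halink, hblink, hab_ne, habf⟩ := hab
          intro s' hs' hs'card hsub
          obtain ⟨c, hc, hsubc, hccard⟩ := hdim.2 _ habf
          have haτ : a ∉ τ := halink.1
          have hbτ : b ∉ τ := hblink.1
          have h1 : Rel X s' c :=
            ih (insert a τ) halink.2 (hmeas a haτ) s' hs' hs'card hsub c hc hccard
              (by
                refine Finset.insert_subset ?_ ?_
                · exact hsubc (Finset.mem_insert_self a _)
                · intro x hx
                  exact hsubc (Finset.mem_insert_of_mem (Finset.mem_insert_of_mem hx)))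
          have h2 : Rel X c t := by
            apply ihP c hc hccard
            refine Finset.insert_subset ?_ ?_
            · exact hsubc (Finset.mem_insert_of_mem (Finset.mem_insert_self b _))
            · intro x hx
              exact hsubc (Finset.mem_insert_of_mem (Finset.mem_insert_of_mem hx))
          exact h1.trans h2
      exact key s hs hscard (Finset.insert_subset (Finset.mem_sdiff.mp hus).1 hτs)
    · -- τ.card = n or n + 1
      rcases Nat.eq_or_lt_of_le hge with heq | hlt
      · exact rel_adj X hn htrans heq.symm hs hscard hτs ht htcard hτt
      · have h1 : τ = s := Finset.eq_of_subset_of_card_le hτs (by omega)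
        have h2 : τ = t := Finset.eq_of_subset_of_card_le hτt (by omega)
        rw [← h1, ← h2]
        exact Rel.rfl X τ

end SComplexAux

open SComplex in
/-- Lemma 1.6: if `X` is a connected locally finite simplicial complex of dimension `n`
with connected links in codimension `≥ 2`, and the stabilizer of every `(n-1)`-simplex
acts transitively on its link, then `Aut(X)` acts transitively on `n`-simplices. -/
theorem aut_transitive_on_top_simplices {V : Type*} [DecidableEq V] (X : SComplex V)
    (hconn : X.IsConn) (hlf : X.LocallyFinite) (n : ℕ) (hn : 1 ≤ n)
    (hdim : X.IsPureDim n)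
    (hlinks : ∀ s ∈ X.faces, s.card ≤ n - 1 → X.LinkConn s)
    (htrans : ∀ σ ∈ X.faces, σ.card = n →
      ∀ u ∈ X.linkVerts σ, ∀ w ∈ X.linkVerts σ,
        ∃ g ∈ X.aut, (∀ v ∈ σ, g v = v) ∧ g u = w) :
    ∀ s ∈ X.faces, ∀ t ∈ X.faces, s.card = n + 1 → t.card = n + 1 →
      ∃ g ∈ X.aut, s.map (Equiv.toEmbedding g) = t := by
  intro s hs t ht hscard htcard
  have gallery := SComplexAux.rel_of_common_face X hn hdim hlinks htrans (n + 1)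
  -- pick vertices
  have hsne : s.Nonempty := Finset.card_pos.mp (by omega)
  have htne : t.Nonempty := Finset.card_pos.mp (by omega)
  obtain ⟨u, hu⟩ := hsne
  obtain ⟨w, hw⟩ := htne
  have hvert : ∀ (c : Finset V), c ∈ X.faces → ∀ v ∈ c, ({v} : Finset V) ∈ X.faces := by
    intro c hc v hv
    exact X.down_closed c hc {v} (Finset.singleton_subset_iff.mpr hv)
      (Finset.singleton_ne_empty v)
  have hchain := hconn u w (hvert s hs u hu) (hvert t ht w hw)
  have key : ∀ s' ∈ X.faces, s'.card = n + 1 → u ∈ s' → SComplexAux.Rel X s' t := by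
    clear hu hs hscard
    induction hchain using Relation.ReflTransGen.head_induction_on with
    | refl =>
      intro s' hs' hs'card hu'
      exact gallery {w} (hvert s' hs' w hu') (by simp) s' hs' hs'card
        (Finset.singleton_subset_iff.mpr hu') t ht htcard
        (Finset.singleton_subset_iff.mpr hw)
    | head hab hbw ihP =>
      rename_i a b
      obtain ⟨hab_ne, habf⟩ := hab
      intro s' hs' hs'card ha'
      obtain ⟨c, hc, hsubc, hccard⟩ := hdim.2 _ habf
      have h1 : SComplexAux.Rel X s' c :=
        gallery {a} (hvert s' hs' a ha') (by simp) s' hs' hs'card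
          (Finset.singleton_subset_iff.mpr ha') c hc hccard
          (Finset.singleton_subset_iff.mpr (hsubc (Finset.mem_insert_self a {b})))
      have h2 : SComplexAux.Rel X c t := ihP c hc hccard (hsubc (Finset.mem_insert_of_mem (Finset.mem_singleton_self b)))
      exact h1.trans h2
  exact key s hs hscard hu
end
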